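/- arXiv:math/9911075 — 5 statements merged into one kernel-verified Lean document; each statement's English description precedes it below -/
import Mathlib

section
/- Let m ≥ 1 be an integer. Let (π_k)_{k≥0} be a sequence of m×m matrices over L with limsup_{k→∞} |π_k|^{q^{-k}} < ∞ and let (φ_j)_{j≥0} be a sequence in L^m with limsup_{j→∞} |φ_j|^{q^{-j}} < ∞ (these are the conditions that the series P(τ)z = Σ_{k≥0} π_k z^{q^k} and f(t) = Σ_{j≥0} φ_j t^{q^j}/D_j have positive radii of convergence). Then for every y_0 ∈ L^m there is exactly one sequence (y_l)_{l≥0} in L^m beginning with the given y_0 and satisfying, for every l ≥ 0, the recurrence y_{l+1} = Σ_{n+k=l} π_k^q · y_n^{q^{k+1}} · [n+1]^{q^k}[n+2]^{q^{k-1}}⋯[n+k]^q + φ_l^q (the product of brackets being omitted when k = 0); this recurrence expresses that the formal series y(t) = Σ_{i≥0} y_i t^{q^i}/D_i is the unique formal solution of the regular system dy(t) = P(τ)y(t) + f(t) with initial condition lim_{t→0} t^{-1}y(t) = y_0. Moreover this sequence satisfies limsup_{l→∞} |y_l|^{q^{-l}} < ∞, i.e. the solution series y has a positive radius of convergence. 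-/
/-! The recurrence determines `y (l + 1)` from `y 0, …, y l`, which gives existence and
uniqueness. For convergence choose `C ≥ 1` with `|π_k| ≤ C^{q^k}`, `|φ_l| ≤ C^{q^l}` and
`|y_0| ≤ C`. As `|[n]| ≤ 1`, the ultrametric inequality propagates `|y_l| ≤ C^{3q^l - 2}`
through the recurrence: the summand with `n + k = l` is at most
`C^{q^{k+1}} · C^{(3q^n - 2)q^{k+1}} = C^{3q^{l+1} - q^{k+1}}`, and `q^{k+1} ≥ 2` absorbs the
loss. Hence `|y_l|^{q^{-l}} ≤ C^3`. -/

/- Context: `q = p^υ`, `L` is an algebraically closed field of characteristic `p`,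
complete w.r.t. the nontrivial nonarchimedean absolute value `abv`, `x ∈ L` with
`|x| = q⁻¹`, `[n] = x^{q^n} - x`, and `D_0 = 1`, `D_i = [i]·D_{i-1}^q` are the
Carlitz factorials. -/

/-- The Carlitz bracket `[n] = x^{q^n} - x`. -/
def carlitzBr (q : ℕ) {L : Type*} [CommRing L] (x : L) (n : ℕ) : L :=
  x ^ q ^ n - x

/-- A formal series `Σ_{n≥0} c_n t^{q^n}/D_n` has a positive radius of convergence
iff `limsup_{n→∞} |c_n|^{q^{-n}} < ∞`. -/
def HasPosRadius (q : ℕ) {L : Type*} [Field L] (abv : AbsoluteValue L ℝ)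
    (c : ℕ → L) : Prop :=
  Filter.limsup (fun n => ENNReal.ofReal (abv (c n)) ^ (((q : ℝ) ^ n)⁻¹))
    Filter.atTop < ⊤

/-- The coefficient recurrence (8) of the regular system `dy = P(τ)y + f`:
`y_{l+1} = Σ_{n+k=l} π_k^q · y_n^{q^{k+1}} · [n+1]^{q^k} ⋯ [n+k]^q + φ_l^q`. -/
def RegularRecurrence (q : ℕ) {L : Type*} [Field L] (x : L) {m : ℕ}
    (π : ℕ → Matrix (Fin m) (Fin m) L) (φ : ℕ → Fin m → L)
    (y : ℕ → Fin m → L) : Prop :=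
  ∀ l : ℕ, y (l + 1) =
    (∑ nk ∈ Finset.HasAntidiagonal.antidiagonal l,
      (∏ s ∈ Finset.Icc 1 nk.2, carlitzBr q x (nk.1 + s) ^ q ^ (nk.2 + 1 - s)) •
        Matrix.mulVec ((π nk.2).map (fun e => e ^ q))
          (fun i => y nk.1 i ^ q ^ (nk.2 + 1)))
    + fun i => φ l i ^ q

def seqOfRecurrence {α : Type*} (F : (ℕ → α) → ℕ → α) (y₀ : α) : ℕ → α
  | 0 => y₀
  | l + 1 => F (fun n => if n ≤ l then seqOfRecurrence F y₀ n else y₀) l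

theorem existsUnique_of_recurrence {α : Type*} (F : (ℕ → α) → ℕ → α)
    (hF : ∀ a b l, (∀ n ≤ l, a n = b n) → F a l = F b l) (y₀ : α) :
    ∃! y : ℕ → α, y 0 = y₀ ∧ ∀ l, y (l + 1) = F y l := by
  refine ⟨seqOfRecurrence F y₀, ⟨by rw [seqOfRecurrence], fun l => ?_⟩, fun z ⟨hz₀, hz⟩ => ?_⟩
  · rw [seqOfRecurrence]
    exact hF _ _ l fun n hn => if_pos hn
  · funext l
    induction l using Nat.strong_induction_on with
    | _ l ih =>
      cases l with
      | zero => rw [hz₀, seqOfRecurrence]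
      | succ l =>
        rw [hz, seqOfRecurrence]
        exact hF _ _ l fun n hn => by rw [if_pos hn, ih n (by omega)]

namespace IsNonarchimedean

variable {α β F : Type*} [AddCommMonoid β] [FunLike F β ℝ] [NonnegHomClass F β ℝ]
  [ZeroHomClass F β ℝ] {v : F}

lemma apply_sum_le_of_forall_le (hv : IsNonarchimedean v) {s : Finset α} {l : α → β} {B : ℝ}
    (hB : 0 ≤ B) (h : ∀ i ∈ s, v (l i) ≤ B) : v (∑ i ∈ s, l i) ≤ B :=
  hv.apply_sum_le.trans (Real.iSup_le (fun i => h i i.2) hB)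

end IsNonarchimedean

section Radius

variable {L : Type*} [Field L] {abv : AbsoluteValue L ℝ} {q : ℕ} {c : ℕ → L}

lemma ofReal_rpow_inv_le_ofReal_iff (hq : 0 < q) {a C : ℝ} (hC : 0 ≤ C) (n : ℕ) :
    ENNReal.ofReal a ^ ((q : ℝ) ^ n)⁻¹ ≤ ENNReal.ofReal C ↔ a ≤ C ^ q ^ n := by
  rw [ENNReal.rpow_inv_le_iff (by positivity), ← Nat.cast_pow, ENNReal.rpow_natCast,
    ← ENNReal.ofReal_pow hC, ENNReal.ofReal_le_ofReal_iff (by positivity)]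

lemma hasPosRadius_of_le_pow (hq : 0 < q) {C : ℝ} (hC : 0 ≤ C)
    (h : ∀ n, abv (c n) ≤ C ^ q ^ n) : HasPosRadius q abv c :=
  (Filter.limsup_le_of_le (by isBoundedDefault) (Filter.Eventually.of_forall fun n =>
    (ofReal_rpow_inv_le_ofReal_iff hq hC n).2 (h n))).trans_lt ENNReal.ofReal_lt_top

lemma HasPosRadius.eventually_le_pow (hq : 0 < q) (h : HasPosRadius q abv c) :
    ∀ᶠ C in Filter.atTop, ∀ n, abv (c n) ≤ C ^ q ^ n := by
  set T := Filter.limsup (fun n => ENNReal.ofReal (abv (c n)) ^ ((q : ℝ) ^ n)⁻¹)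
    Filter.atTop + 1
  have hT : T ≠ ⊤ := ENNReal.add_ne_top.2 ⟨h.ne, ENNReal.one_ne_top⟩
  obtain ⟨N, hN⟩ := Filter.eventually_atTop.1
    (Filter.eventually_lt_of_limsup_lt (ENNReal.lt_add_right h.ne one_ne_zero))
  have htail : ∀ n ≥ N, abv (c n) ≤ T.toReal ^ q ^ n := fun n hn =>
    (ofReal_rpow_inv_le_ofReal_iff hq ENNReal.toReal_nonneg n).1
      (by rw [ENNReal.ofReal_toReal hT]; exact (hN n hn).le)
  have hhead : ∀ n ∈ Set.Iio N, ∀ᶠ C in Filter.atTop, abv (c n) ≤ C ^ q ^ n := fun n _ =>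
    (Filter.tendsto_pow_atTop (pow_pos hq n).ne').eventually_ge_atTop _
  filter_upwards [(Filter.eventually_all_finite (Set.finite_Iio N)).2 hhead,
    Filter.eventually_ge_atTop T.toReal] with C hhead hC n
  rcases lt_or_ge n N with hn | hn
  · exact hhead n hn
  · exact (htail n hn).trans (pow_le_pow_left₀ ENNReal.toReal_nonneg hC _)

end Radius

section Estimates

variable {L : Type*} [Field L] {abv : AbsoluteValue L ℝ}

lemma abv_carlitzBr_le_one (hna : IsNonarchimedean abv) {x : L} (hx : abv x ≤ 1) (q n : ℕ) :
    abv (carlitzBr q x n) ≤ 1 := by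
  rw [carlitzBr, sub_eq_add_neg]
  refine (hna _ _).trans (max_le ?_ ?_)
  · rw [map_pow]
    exact pow_le_one₀ (abv.nonneg _) hx
  · rwa [abv.map_neg]

variable {q m : ℕ} {x : L} {C : ℝ}

lemma abv_regularTerm_le (hq : 2 ≤ q) (hna : IsNonarchimedean abv) (hx : abv x ≤ 1)
    (hC : 1 ≤ C) {n k : ℕ} {P : Matrix (Fin m) (Fin m) L} {v : Fin m → L}
    (hP : ∀ i j, abv (P i j) ≤ C ^ q ^ k) (hv : ∀ j, abv (v j) ≤ C ^ (3 * q ^ n - 2))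
    (i : Fin m) :
    abv (((∏ s ∈ Finset.Icc 1 k, carlitzBr q x (n + s) ^ q ^ (k + 1 - s)) •
        Matrix.mulVec (P.map (fun e => e ^ q)) (fun j => v j ^ q ^ (k + 1))) i) ≤
      C ^ (3 * q ^ (n + k + 1) - 2) := by
  have hbrackets : abv (∏ s ∈ Finset.Icc 1 k, carlitzBr q x (n + s) ^ q ^ (k + 1 - s)) ≤ 1 := by
    rw [map_prod]
    refine Finset.prod_le_one (fun _ _ => abv.nonneg _) fun s _ => ?_
    rw [map_pow]
    exact pow_le_one₀ (abv.nonneg _) (abv_carlitzBr_le_one hna hx q _)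
  rw [Pi.smul_apply, smul_eq_mul, map_mul, Matrix.mulVec, dotProduct]
  refine (mul_le_of_le_one_left (abv.nonneg _) hbrackets).trans
    (hna.apply_sum_le_of_forall_le (by positivity) fun j _ => ?_)
  have hexp : q ^ (k + 1) + (3 * q ^ n - 2) * q ^ (k + 1) ≤ 3 * q ^ (n + k + 1) - 2 := by
    have h₁ : 1 ≤ q ^ n := Nat.one_le_pow _ _ (by omega)
    have h₂ : 2 ≤ q ^ (k + 1) := hq.trans (Nat.le_self_pow (by omega) q)
    have h₃ : q ^ (k + 1) ≤ q ^ n * q ^ (k + 1) := Nat.le_mul_of_pos_left _ h₁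
    rw [add_assoc, pow_add q n, Nat.sub_mul, mul_assoc]
    omega
  rw [Matrix.map_apply, map_mul, map_pow, map_pow]
  calc abv (P i j) ^ q * abv (v j) ^ q ^ (k + 1)
      ≤ (C ^ q ^ k) ^ q * (C ^ (3 * q ^ n - 2)) ^ q ^ (k + 1) := by
        gcongr
        exacts [hP i j, hv j]
    _ = C ^ (q ^ (k + 1) + (3 * q ^ n - 2) * q ^ (k + 1)) := by ring
    _ ≤ C ^ (3 * q ^ (n + k + 1) - 2) := pow_le_pow_right₀ hC hexp

end Estimates

section RegularRecurrence

variable {L : Type*} [Field L] {q m : ℕ} {x : L} {π : ℕ → Matrix (Fin m) (Fin m) L}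
  {φ : ℕ → Fin m → L}

variable (q x π φ) in
def regularRhs (y : ℕ → Fin m → L) (l : ℕ) : Fin m → L :=
  (∑ nk ∈ Finset.HasAntidiagonal.antidiagonal l,
      (∏ s ∈ Finset.Icc 1 nk.2, carlitzBr q x (nk.1 + s) ^ q ^ (nk.2 + 1 - s)) •
        Matrix.mulVec ((π nk.2).map (fun e => e ^ q))
          (fun i => y nk.1 i ^ q ^ (nk.2 + 1)))
    + fun i => φ l i ^ q

lemma regularRecurrence_iff {y : ℕ → Fin m → L} :
    RegularRecurrence q x π φ y ↔ ∀ l, y (l + 1) = regularRhs q x π φ y l :=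
  Iff.rfl

lemma regularRhs_congr {y z : ℕ → Fin m → L} {l : ℕ} (h : ∀ n ≤ l, y n = z n) :
    regularRhs q x π φ y l = regularRhs q x π φ z l := by
  refine congrArg (· + _) (Finset.sum_congr rfl fun nk hnk => ?_)
  rw [Finset.HasAntidiagonal.mem_antidiagonal] at hnk
  rw [h nk.1 (by omega)]

variable {abv : AbsoluteValue L ℝ} {C : ℝ}

lemma abv_regularRhs_le (hq : 2 ≤ q) (hna : IsNonarchimedean abv) (hx : abv x ≤ 1)
    (hC : 1 ≤ C) (hπ : ∀ k i j, abv (π k i j) ≤ C ^ q ^ k) (hφ : ∀ l i, abv (φ l i) ≤ C ^ q ^ l)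
    {y : ℕ → Fin m → L} {l : ℕ} (hy : ∀ n ≤ l, ∀ j, abv (y n j) ≤ C ^ (3 * q ^ n - 2))
    (i : Fin m) :
    abv (regularRhs q x π φ y l i) ≤ C ^ (3 * q ^ (l + 1) - 2) := by
  rw [regularRhs, Pi.add_apply, Finset.sum_apply]
  refine (hna _ _).trans (max_le (hna.apply_sum_le_of_forall_le (by positivity) ?_) ?_)
  · rintro ⟨n, k⟩ hnk
    rw [Finset.HasAntidiagonal.mem_antidiagonal] at hnk
    subst hnk
    exact abv_regularTerm_le hq hna hx hC (hπ k) (hy n (by omega)) i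
  · have := Nat.one_le_pow (l + 1) q (by omega)
    calc abv (φ l i ^ q) = abv (φ l i) ^ q := map_pow abv _ q
      _ ≤ (C ^ q ^ l) ^ q := pow_le_pow_left₀ (abv.nonneg _) (hφ l i) q
      _ = C ^ q ^ (l + 1) := by rw [← pow_mul, ← pow_succ]
      _ ≤ C ^ (3 * q ^ (l + 1) - 2) := pow_le_pow_right₀ hC (by omega)

lemma abv_le_of_regularRecurrence (hq : 2 ≤ q) (hna : IsNonarchimedean abv) (hx : abv x ≤ 1)
    (hC : 1 ≤ C) (hπ : ∀ k i j, abv (π k i j) ≤ C ^ q ^ k) (hφ : ∀ l i, abv (φ l i) ≤ C ^ q ^ l)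
    {y : ℕ → Fin m → L} (hy₀ : ∀ i, abv (y 0 i) ≤ C) (hy : RegularRecurrence q x π φ y)
    (l : ℕ) (i : Fin m) : abv (y l i) ≤ C ^ (3 * q ^ l - 2) := by
  induction l using Nat.strong_induction_on generalizing i with
  | _ l ih =>
    cases l with
    | zero => simpa using hy₀ i
    | succ l =>
      rw [regularRecurrence_iff.1 hy l]
      exact abv_regularRhs_le hq hna hx hC hπ hφ (fun n hn => ih n (by omega)) i

lemma hasPosRadius_of_regularRecurrence (hq : 2 ≤ q) (hna : IsNonarchimedean abv)
    (hx : abv x ≤ 1) (hC : 1 ≤ C) (hπ : ∀ k i j, abv (π k i j) ≤ C ^ q ^ k)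
    (hφ : ∀ l i, abv (φ l i) ≤ C ^ q ^ l) {y : ℕ → Fin m → L} (hy₀ : ∀ i, abv (y 0 i) ≤ C)
    (hy : RegularRecurrence q x π φ y) (i : Fin m) : HasPosRadius q abv (fun l => y l i) :=
  hasPosRadius_of_le_pow (C := C ^ 3) (by omega) (by positivity) fun l => by
    rw [← pow_mul]
    exact (abv_le_of_regularRecurrence hq hna hx hC hπ hφ hy₀ hy l i).trans
      (pow_le_pow_right₀ hC (by omega))

end RegularRecurrence

theorem regular_system_unique_convergent_solution_general
    (p υ q : ℕ) [Fact p.Prime] (hυ : 1 ≤ υ) (hq : q = p ^ υ)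
    (L : Type*) [Field L]
    (abv : AbsoluteValue L ℝ) (hna : IsNonarchimedean (abv : L → ℝ))
    (x : L) (hx : abv x = (q : ℝ)⁻¹)
    (m : ℕ)
    (π : ℕ → Matrix (Fin m) (Fin m) L) (φ : ℕ → Fin m → L)
    (hπ : ∀ i j : Fin m, HasPosRadius q abv (fun k => π k i j))
    (hφ : ∀ i : Fin m, HasPosRadius q abv (fun j => φ j i))
    (y0 : Fin m → L) :
    ∃ y : ℕ → Fin m → L,
      (y 0 = y0 ∧ RegularRecurrence q x π φ y) ∧
      (∀ i : Fin m, HasPosRadius q abv (fun l => y l i)) ∧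
      (∀ z : ℕ → Fin m → L, z 0 = y0 → RegularRecurrence q x π φ z → z = y) := by
  have hq₂ : 2 ≤ q := hq ▸ (Fact.out : p.Prime).two_le.trans (Nat.le_self_pow (by omega) p)
  have hx₁ : abv x ≤ 1 := hx ▸ inv_le_one_of_one_le₀ (by exact_mod_cast hq₂.trans' one_le_two)
  obtain ⟨y, ⟨hy₀, hy⟩, huniq⟩ :=
    existsUnique_of_recurrence (regularRhs q x π φ) (fun _ _ _ => regularRhs_congr) y0
  obtain ⟨C, hC, hπC, hφC, hy₀C⟩ : ∃ C : ℝ, 1 ≤ C ∧ (∀ i j k, abv (π k i j) ≤ C ^ q ^ k) ∧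
      (∀ i l, abv (φ l i) ≤ C ^ q ^ l) ∧ ∀ i, abv (y0 i) ≤ C :=
    (Filter.eventually_ge_atTop 1 |>.and <|
      (Filter.eventually_all.2 fun i => Filter.eventually_all.2 fun j =>
        (hπ i j).eventually_le_pow (by omega)) |>.and <|
      (Filter.eventually_all.2 fun i => (hφ i).eventually_le_pow (by omega)) |>.and <|
      Filter.eventually_all.2 fun i => Filter.eventually_ge_atTop _).exists
  have hrec : RegularRecurrence q x π φ y := regularRecurrence_iff.2 hy
  refine ⟨y, ⟨hy₀, hrec⟩, hasPosRadius_of_regularRecurrence hq₂ hna hx₁ hC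
    (fun k i j => hπC i j k) (fun l i => hφC i l) (hy₀ ▸ hy₀C) hrec,
    fun z hz₀ hz => huniq z ⟨hz₀, regularRecurrence_iff.1 hz⟩⟩

/-- the regular system `dy = P(τ)y + f` with initial condition
`lim_{t→0} t⁻¹ y(t) = y_0` has a unique formal solution `y = Σ y_i t^{q^i}/D_i`
(given by the recurrence), and this solution has a positive radius of convergence. -/
theorem regular_system_unique_convergent_solution
    (p υ q : ℕ) [Fact p.Prime] (hυ : 1 ≤ υ) (hq : q = p ^ υ)
    (L : Type*) [Field L] [IsAlgClosed L] [CharP L p]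
    (abv : AbsoluteValue L ℝ) (hna : IsNonarchimedean (abv : L → ℝ))
    (x : L) (hx : abv x = (q : ℝ)⁻¹)
    (m : ℕ) (hm : 1 ≤ m)
    (π : ℕ → Matrix (Fin m) (Fin m) L) (φ : ℕ → Fin m → L)
    (hπ : ∀ i j : Fin m, HasPosRadius q abv (fun k => π k i j))
    (hφ : ∀ i : Fin m, HasPosRadius q abv (fun j => φ j i))
    (y0 : Fin m → L) :
    ∃ y : ℕ → Fin m → L,
      (y 0 = y0 ∧ RegularRecurrence q x π φ y) ∧
      (∀ i : Fin m, HasPosRadius q abv (fun l => y l i)) ∧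
      (∀ z : ℕ → Fin m → L, z 0 = y0 → RegularRecurrence q x π φ z → z = y) :=
  regular_system_unique_convergent_solution_general p υ q hυ hq L abv hna x hx m π φ hπ hφ y0
end

section
/- Let m ≥ 1 and a_0, a_1, …, a_m ∈ L with a_m ≠ 0, and for n ≥ m set Φ_n = a_0 + Σ_{j=1}^{m} a_j [n−j+1]^{q^{j−1}}[n−j+2]^{q^{j−2}}⋯[n]. Then there exist real constants μ_1 > 0 and μ_2 > 0 and an integer n_0 ≥ m such that |Φ_n| ≥ μ_1 · q^{−μ_2 q^n} for all n ≥ n_0. In particular, Φ_n ≠ 0 for all sufficiently large n. -/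
open Polynomial Finset Filter

section Newton

variable {R : Type*} [CommRing R]

noncomputable def newtonPoly (a z : ℕ → R) (m : ℕ) : R[X] :=
  ∑ j ∈ range (m + 1), C (a j) * ∏ t ∈ range j, (X - C (z t))

lemma monic_prod_X_sub_C_range (z : ℕ → R) (j : ℕ) :
    (∏ t ∈ range j, (X - C (z t))).Monic :=
  monic_prod_of_monic _ _ fun t _ => monic_X_sub_C (z t)

lemma coeff_prod_X_sub_C_range [Nontrivial R] (z : ℕ → R) {j m : ℕ} (hj : j ≤ m) :
    (∏ t ∈ range j, (X - C (z t))).coeff m = if j = m then 1 else 0 := by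
  have hdeg : (∏ t ∈ range j, (X - C (z t))).natDegree = j := by
    rw [natDegree_prod_of_monic _ _ fun t _ => monic_X_sub_C (z t)]
    simp
  split_ifs with h
  · subst h
    simpa [hdeg] using (monic_prod_X_sub_C_range z j).coeff_natDegree
  · exact coeff_eq_zero_of_natDegree_lt (by omega)

lemma newtonPoly_coeff_self [Nontrivial R] (a z : ℕ → R) (m : ℕ) :
    (newtonPoly a z m).coeff m = a m := by
  simp only [newtonPoly, finsetSum_coeff, coeff_C_mul]
  rw [sum_congr rfl fun j hj => by
    rw [coeff_prod_X_sub_C_range z (Nat.lt_succ_iff.mp (mem_range.mp hj))]]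
  simp

lemma eval_newtonPoly (a z : ℕ → R) (m : ℕ) (y : R) :
    (newtonPoly a z m).eval y = ∑ j ∈ range (m + 1), a j * ∏ t ∈ range j, (y - z t) := by
  simp [newtonPoly, eval_finsetSum, eval_prod]

end Newton

section Carlitz

variable {L : Type*} [CommRing L] {p : ℕ} [ExpChar L p]

lemma carlitzBr_pow (υ : ℕ) (x : L) (k t : ℕ) :
    carlitzBr (p ^ υ) x k ^ (p ^ υ) ^ t = x ^ (p ^ υ) ^ (k + t) - x ^ (p ^ υ) ^ t := by
  rw [carlitzBr, ← pow_mul p υ t, sub_pow_expChar_pow, pow_mul p υ t, ← pow_mul x, ← pow_add]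

lemma prod_carlitzBr_pow (υ : ℕ) (x : L) {j n : ℕ} (hjn : j ≤ n) :
    ∏ s ∈ Icc 1 j, carlitzBr (p ^ υ) x (n - j + s) ^ (p ^ υ) ^ (j - s)
      = ∏ t ∈ range j, (x ^ (p ^ υ) ^ n - x ^ (p ^ υ) ^ t) := by
  set f : ℕ → L := fun t => x ^ (p ^ υ) ^ n - x ^ (p ^ υ) ^ t
  calc ∏ s ∈ Icc 1 j, carlitzBr (p ^ υ) x (n - j + s) ^ (p ^ υ) ^ (j - s)
      = ∏ s ∈ Ico 1 (j + 1), f (j - s) := by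
        rw [Ico_add_one_right_eq_Icc]
        refine prod_congr rfl fun s hs => ?_
        have := (mem_Icc.mp hs).2
        rw [carlitzBr_pow, show n - j + s + (j - s) = n by omega]
    _ = ∏ t ∈ range j, f t := by
        rw [prod_Ico_reflect f 1 le_rfl, range_eq_Ico]
        simp

lemma sum_carlitzBr_eq_eval_newtonPoly (υ : ℕ) (x : L) (a : ℕ → L) {m n : ℕ} (hmn : m ≤ n) :
    a 0 + ∑ j ∈ Icc 1 m, a j * ∏ s ∈ Icc 1 j, carlitzBr (p ^ υ) x (n - j + s) ^ (p ^ υ) ^ (j - s)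
      = (newtonPoly a (fun t => x ^ (p ^ υ) ^ t) m).eval (x ^ (p ^ υ) ^ n) := by
  rw [eval_newtonPoly, range_eq_Ico, sum_eq_sum_Ico_succ_bot m.succ_pos, Nat.succ_eq_add_one,
    zero_add, Ico_add_one_right_eq_Icc, prod_range_zero, mul_one]
  congr 1
  exact sum_congr rfl fun j hj => by rw [prod_carlitzBr_pow υ x ((mem_Icc.mp hj).2.trans hmn)]

end Carlitz

section Nonarchimedean

variable {L : Type*} [Field L]

lemma AbsoluteValue.apply_eval_le_sum_coeff (abv : AbsoluteValue L ℝ) (H : L[X]) {y : L}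
    (hy : abv y ≤ 1) : abv (H.eval y) ≤ ∑ i ∈ range (H.natDegree + 1), abv (H.coeff i) := by
  rw [eval_eq_sum_range]
  refine (abv.sum_le _ _).trans (sum_le_sum fun i _ => ?_)
  rw [abv.map_mul, abv.map_pow]
  exact mul_le_of_le_one_right (abv.nonneg _) (pow_le_one₀ (abv.nonneg _) hy)

variable {abv : AbsoluteValue L ℝ}

lemma IsNonarchimedean.exists_apply_eval_eq_coeff_zero (hna : IsNonarchimedean abv) {G : L[X]}
    (hG : G.coeff 0 ≠ 0) : ∃ δ > 0, ∀ y, abv y < δ → abv (G.eval y) = abv (G.coeff 0) := by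
  set S := ∑ i ∈ range (G.divX.natDegree + 1), abv (G.divX.coeff i)
  have hb : 0 < abv (G.coeff 0) := abv.pos hG
  refine ⟨min 1 (abv (G.coeff 0) / (S + 1)), by positivity, fun y hy => ?_⟩
  have hy1 : abv y ≤ 1 := (lt_min_iff.mp hy).1.le
  have hyS : abv y * (S + 1) < abv (G.coeff 0) :=
    (lt_div_iff₀ (by positivity)).mp (lt_min_iff.mp hy).2
  have htail : abv (y * G.divX.eval y) < abv (G.coeff 0) :=
    calc abv (y * G.divX.eval y) ≤ abv y * S := by
          rw [abv.map_mul]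
          exact mul_le_mul_of_nonneg_left (abv.apply_eval_le_sum_coeff _ hy1) (abv.nonneg _)
      _ ≤ abv y * (S + 1) := by nlinarith [abv.nonneg y]
      _ < abv (G.coeff 0) := hyS
  conv_lhs => rw [← X_mul_divX_add G]
  rw [eval_add, eval_mul, eval_X, eval_C]
  exact hna.add_eq_right_of_lt htail

lemma IsNonarchimedean.exists_apply_eval_eq_mul_pow (hna : IsNonarchimedean abv) {F : L[X]}
    (hF : F ≠ 0) :
    ∃ c > 0, ∃ r : ℕ, ∃ δ > 0, ∀ y, abv y < δ → abv (F.eval y) = c * abv y ^ r := by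
  obtain ⟨G, hFG, hG⟩ := exists_eq_pow_rootMultiplicity_mul_and_not_dvd F hF 0
  rw [map_zero, sub_zero] at hFG hG
  generalize F.rootMultiplicity 0 = r at hFG
  subst hFG
  have hG0 : G.coeff 0 ≠ 0 := mt X_dvd_iff.mpr hG
  obtain ⟨δ, hδ, hGδ⟩ := hna.exists_apply_eval_eq_coeff_zero hG0
  refine ⟨abv (G.coeff 0), abv.pos hG0, r, δ, hδ, fun y hy => ?_⟩
  rw [eval_mul, eval_pow, eval_X, abv.map_mul, abv.map_pow, hGδ y hy, mul_comm]

end Nonarchimedean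

theorem Phi_lower_bound_general
    (p υ q : ℕ) [Fact p.Prime] (hυ : 1 ≤ υ) (hq : q = p ^ υ)
    (L : Type*) [Field L] [CharP L p]
    (abv : AbsoluteValue L ℝ) (hna : IsNonarchimedean (abv : L → ℝ))
    (x : L) (hx : abv x = (q : ℝ)⁻¹)
    (m : ℕ) (a : ℕ → L) (ham : a m ≠ 0)
    (Φ : ℕ → L)
    (hΦ : ∀ n : ℕ, Φ n = a 0 + ∑ j ∈ Finset.Icc 1 m, a j *
        ∏ s ∈ Finset.Icc 1 j, carlitzBr q x (n - j + s) ^ q ^ (j - s)) :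
    ∃ μ1 : ℝ, 0 < μ1 ∧ ∃ μ2 : ℝ, 0 < μ2 ∧ ∃ n0 : ℕ, m ≤ n0 ∧
      ∀ n : ℕ, n0 ≤ n →
        μ1 * (q : ℝ) ^ (-(μ2 * (q : ℝ) ^ n)) ≤ abv (Φ n) ∧ Φ n ≠ 0 := by
  subst hq
  have hF : newtonPoly a (fun t => x ^ (p ^ υ) ^ t) m ≠ 0 := fun h =>
    ham (by rw [← newtonPoly_coeff_self a _ m, h, coeff_zero])
  obtain ⟨c, hc, r, δ, hδ, hFδ⟩ := hna.exists_apply_eval_eq_mul_pow hF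
  have hq : 1 < p ^ υ := Nat.one_lt_pow (by omega) (Fact.out : p.Prime).one_lt
  have hsmall : ∀ᶠ n in atTop, abv (x ^ (p ^ υ) ^ n) < δ := by
    simp only [abv.map_pow, hx]
    refine ((tendsto_pow_atTop_nhds_zero_of_lt_one (by positivity)
      (inv_lt_one_of_one_lt₀ (Nat.one_lt_cast.mpr hq))).comp
      (tendsto_pow_atTop_atTop_of_one_lt hq)).eventually (gt_mem_nhds hδ)
  obtain ⟨N, hN⟩ := eventually_atTop.mp hsmall
  refine ⟨c, hc, r + 1, by positivity, max m N, le_max_left _ _, fun n hn => ?_⟩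
  have hΦn : abv (Φ n) = c * (p ^ υ : ℕ) ^ (-((r : ℝ) * (p ^ υ : ℕ) ^ n)) := by
    rw [hΦ, sum_carlitzBr_eq_eval_newtonPoly υ x a (le_of_max_le_left hn),
      hFδ _ (hN n (le_of_max_le_right hn)), abv.map_pow, hx, ← pow_mul, inv_pow, ← Real.rpow_natCast,
      ← Real.rpow_neg (by positivity)]
    push_cast
    ring_nf
  refine ⟨?_, fun h => ?_⟩
  · rw [hΦn]
    gcongr
    · exact_mod_cast hq.le
    · linarith
  · have : 0 < abv (Φ n) := by rw [hΦn]; positivity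
    simp [h] at this

/-- with `a_m ≠ 0` and
`Φ_n = a_0 + Σ_{j=1}^m a_j [n-j+1]^{q^{j-1}} ⋯ [n]` there are `μ_1, μ_2 > 0` and
`n_0 ≥ m` such that `|Φ_n| ≥ μ_1 · q^{-μ_2 q^n}` for all `n ≥ n_0`; in particular
`Φ_n ≠ 0` for all sufficiently large `n`. -/
theorem Phi_lower_bound
    (p υ q : ℕ) [Fact p.Prime] (hυ : 1 ≤ υ) (hq : q = p ^ υ)
    (L : Type*) [Field L] [IsAlgClosed L] [CharP L p]
    (abv : AbsoluteValue L ℝ) (hna : IsNonarchimedean (abv : L → ℝ))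
    (x : L) (hx : abv x = (q : ℝ)⁻¹)
    (m : ℕ) (hm : 1 ≤ m) (a : ℕ → L) (ham : a m ≠ 0)
    (Φ : ℕ → L)
    (hΦ : ∀ n : ℕ, Φ n = a 0 + ∑ j ∈ Finset.Icc 1 m, a j *
        ∏ s ∈ Finset.Icc 1 j, carlitzBr q x (n - j + s) ^ q ^ (j - s)) :
    ∃ μ1 : ℝ, 0 < μ1 ∧ ∃ μ2 : ℝ, 0 < μ2 ∧ ∃ n0 : ℕ, m ≤ n0 ∧
      ∀ n : ℕ, n0 ≤ n →
        μ1 * (q : ℝ) ^ (-(μ2 * (q : ℝ) ^ n)) ≤ abv (Φ n) ∧ Φ n ≠ 0 :=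
  Phi_lower_bound_general p υ q hυ hq L abv hna x hx m a ham Φ hΦ
end

section
/- Let D be a two-sided ideal of 𝒜 which is stable under the coefficient Frobenius map P, in the sense that whenever a finite sum Σ_{i,j} μ_{λ_{ij}} ∘ τ^i ∘ d^j (λ_{ij} ∈ L) belongs to D, the element Σ_{i,j} μ_{λ_{ij}^q} ∘ τ^i ∘ d^j also belongs to D. If D ≠ {0}, then D = 𝒜. In other words, 𝒜 possesses no non-trivial two-sided ideals stable with respect to P. -/
/- Context: `L` is an algebraically closed field of characteristic `p`, `q = p^υ`,
`x ∈ L` is transcendental over the prime field, `rt` is the unique `q`-th root map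
(`rt a ^ q = a`), `[i] = x^{q^i} - x`, `V = L → L` with pointwise addition, and `𝒜`
is the subring of `End(V)` generated by `τ : u ↦ u^q`, the Carlitz derivative
`d : u ↦ (u(xt) - x·u(t))^{1/q}` and the scalar operators `μ_λ : u ↦ λ·u`. -/

/-- The scalar multiplication operator `μ_λ : u ↦ λ·u` on `V = L → L`. -/
def muOp (L : Type*) [CommRing L] (lam : L) : AddMonoid.End (L → L) :=
{ toFun := fun u t => lam * u t
  map_zero' := by funext t; simp
  map_add' := by intro u v; funext t; simp [mul_add] }

/-- The Frobenius operator `τ : u ↦ u^q` (`q = p^υ`) on `V = L → L`. -/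
def tauOp (p υ : ℕ) [Fact p.Prime] (L : Type*) [CommRing L] [CharP L p] :
    AddMonoid.End (L → L) :=
{ toFun := fun u t => u t ^ p ^ υ
  map_zero' := by
    funext t
    exact zero_pow (pow_ne_zero υ (Nat.Prime.ne_zero Fact.out))
  map_add' := by
    intro u v; funext t
    exact add_pow_char_pow (u t) (v t) p υ }

/-- The Carlitz derivative `d : u ↦ (u(xt) - x·u(t))^{1/q}` on `V = L → L`,
where `rt` is the (unique) `q`-th root map on `L`. -/
def dOp (p υ : ℕ) [Fact p.Prime] (L : Type*) [Field L] [CharP L p] (x : L)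
    (rt : L → L) (hrt : ∀ a : L, rt a ^ p ^ υ = a) : AddMonoid.End (L → L) :=
{ toFun := fun u t => rt (u (x * t) - x * u t)
  map_zero' := by
    have hinj : Function.Injective fun a : L => a ^ p ^ υ := by
      intro a b hab
      exact (iterateFrobenius L p υ).injective
        (by simpa [iterateFrobenius_def] using hab)
    funext t
    apply hinj
    simp [hrt, zero_pow (pow_ne_zero υ (Nat.Prime.ne_zero Fact.out))]
  map_add' := by
    have hinj : Function.Injective fun a : L => a ^ p ^ υ := by
      intro a b hab
      exact (iterateFrobenius L p υ).injective
        (by simpa [iterateFrobenius_def] using hab)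
    intro u v; funext t
    apply hinj
    simp only [Pi.add_apply]
    rw [hrt, add_pow_char_pow, hrt, hrt]
    ring }

/-- The ring `𝒜` of `F_q`-linear polynomial differential operators: the subring of
`End(V)` generated by `τ`, `d` and the scalar operators `μ_λ`, `λ ∈ L`. -/
def opRingA (p υ : ℕ) [Fact p.Prime] (L : Type*) [Field L] [CharP L p] (x : L)
    (rt : L → L) (hrt : ∀ a : L, rt a ^ p ^ υ = a) :
    Subring (AddMonoid.End (L → L)) :=
  Subring.closure (Set.range (muOp L) ∪ {tauOp p υ L, dOp p υ L x rt hrt})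

/-!
Every element of `𝒜` is a finite sum `s = Σ μ_{λ_{ij}} τ^i d^j`. Right multiplication by `μ_x`
multiplies the coefficient `λ_{ij}` by `(x^{1/q^j})^{q^i}`, and `(P(s) τ - τ s) d + P(s) μ_x`
has coefficients `x^{q^i} λ_{ij}^q`. As `x` is transcendental, these two families of weights
separate any two positions `(i, j)`, so subtracting a scalar multiple of `s` or of `P(s)` from
one of these products shrinks the support of a nonzero `s ∈ D` without killing it. A nonzero element
of `D` of minimal support is thus a monomial `μ_c τ^i d^j`, and the commutators `[τ^i d^{j+1}, τ]`
and `[d, τ^{i+1}]`, nonzero scalar multiples of `τ^i d^j` and `τ^i`, lower it to `1 ∈ D`.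
-/

open Polynomial in
theorem pow_injective_of_transcendental {R A : Type*} [CommRing R] [Nontrivial R] [CommRing A]
    [Algebra R A] {x : A} (hx : Transcendental R x) : Function.Injective (x ^ · : ℕ → A) := by
  intro a b hab
  by_contra hne
  refine hx ⟨X ^ a - X ^ b, fun h => hne ?_, by simpa [sub_eq_zero] using hab⟩
  simpa using congrArg natDegree (sub_eq_zero.1 h)

section Monoid

variable {M : Type*} [Monoid M] {x : M} {q : ℕ}

theorem pow_pow_injective (hx : Function.Injective (x ^ · : ℕ → M)) (hq : 2 ≤ q) :
    Function.Injective fun k : ℕ => x ^ q ^ k :=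
  hx.comp (Nat.pow_right_injective hq)

theorem iterate_pow_pow_eq_of_pow_eq {r : M → M} (hr : ∀ a, r a ^ q = a) (j : ℕ) (a : M) :
    (r^[j] a) ^ q ^ j = a := by
  induction j generalizing a with
  | zero => simp
  | succ j ih => rw [Function.iterate_succ_apply, pow_succ, pow_mul, ih, hr]

theorem iterate_apply_injective (hx : Function.Injective (x ^ · : ℕ → M)) (hq : 2 ≤ q)
    {r : M → M} (hr : ∀ a, r a ^ q = a) : Function.Injective fun j : ℕ => r^[j] x := by
  intro j l h
  have hpow : ∀ j l : ℕ, (r^[j] x) ^ q ^ (j + l) = x ^ q ^ l := fun j l => by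
    rw [pow_add, pow_mul, iterate_pow_pow_eq_of_pow_eq hr]
  refine (pow_pow_injective hx hq ?_).symm
  simp only at h ⊢
  rw [← hpow j l, h, add_comm, hpow]

end Monoid

theorem Finset.subset_range_prod_range (s : Finset (ℕ × ℕ)) :
    ∃ m n, s ⊆ Finset.range (m + 1) ×ˢ Finset.range (n + 1) :=
  ⟨s.sup Prod.fst, s.sup Prod.snd, fun _ h => Finset.mem_product.2
    ⟨Finset.mem_range_succ_iff.2 (Finset.le_sup (f := Prod.fst) h),
      Finset.mem_range_succ_iff.2 (Finset.le_sup (f := Prod.snd) h)⟩⟩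

theorem Finsupp.pointwise_smul_single {α K : Type*} [Semiring K] (w : α → K) (a : α) (c : K) :
    w • Finsupp.single a c = Finsupp.single a (w a * c) := by
  classical
  ext b
  rw [Finsupp.coe_pointwise_smul, Pi.smul_apply', smul_eq_mul, Finsupp.single_apply,
    Finsupp.single_apply]
  split_ifs with h
  · rw [h]
  · exact mul_zero _

theorem Finsupp.support_pointwise_smul_ssubset {α K : Type*} [Semiring K] [NoZeroDivisors K]
    {w : α → K} {F : α →₀ K} {a b : α} (ha : a ∈ F.support) (hwa : w a ≠ 0)
    (hb : b ∈ F.support) (hwb : w b = 0) :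
    a ∈ (w • F).support ∧ (w • F).support ⊂ F.support := by
  have hsub : (w • F).support ⊆ F.support := fun c hc => by
    rw [Finsupp.mem_support_iff, Finsupp.coe_pointwise_smul, Pi.smul_apply', smul_eq_mul] at hc
    exact Finsupp.mem_support_iff.2 (right_ne_zero_of_mul hc)
  refine ⟨?_, (Finset.ssubset_iff_of_subset hsub).2 ⟨b, hb, ?_⟩⟩
  · rw [Finsupp.mem_support_iff] at ha ⊢
    exact mul_ne_zero hwa ha
  · rw [Finsupp.mem_support_iff, Finsupp.coe_pointwise_smul, Pi.smul_apply', smul_eq_mul,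
      not_not, hwb, zero_mul]

structure IsTwoSidedIdealIn {R : Type*} [Ring R] (A : Subring R) (D : Set R) : Prop where
  add_mem : ∀ a ∈ D, ∀ b ∈ D, a + b ∈ D
  neg_mem : ∀ a ∈ D, -a ∈ D
  mul_mem_left : ∀ a ∈ A, ∀ s ∈ D, a * s ∈ D
  mul_mem_right : ∀ a ∈ A, ∀ s ∈ D, s * a ∈ D

theorem IsTwoSidedIdealIn.sub_mem {R : Type*} [Ring R] {A : Subring R} {D : Set R}
    (hD : IsTwoSidedIdealIn A D) {a b : R} (ha : a ∈ D) (hb : b ∈ D) : a - b ∈ D :=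
  sub_eq_add_neg a b ▸ hD.add_mem a ha _ (hD.neg_mem b hb)

section Operators

variable (L : Type*) [CommRing L]

def muRingHom : L →+* AddMonoid.End (L → L) where
  toFun := muOp L
  map_one' := AddMonoidHom.ext fun u => funext fun t => one_mul (u t)
  map_mul' a b := AddMonoidHom.ext fun u => funext fun t => mul_assoc a b (u t)
  map_zero' := AddMonoidHom.ext fun u => funext fun t => zero_mul (u t)
  map_add' a b := AddMonoidHom.ext fun u => funext fun t => add_mul a b (u t)

theorem muRingHom_apply (a : L) : muRingHom L a = muOp L a := rfl

variable {L} (p υ : ℕ) [Fact p.Prime] [CharP L p]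

local notation "τ" => tauOp p υ L
local notation "μ" => muRingHom L

theorem tauOp_mul_muRingHom (a : L) : τ * μ a = μ (a ^ p ^ υ) * τ :=
  AddMonoidHom.ext fun u => funext fun t => mul_pow a (u t) _

theorem tauOp_pow_mul_muRingHom (i : ℕ) (a : L) :
    τ ^ i * μ a = μ (a ^ (p ^ υ) ^ i) * τ ^ i := by
  induction i generalizing a with
  | zero => simp
  | succ i ih =>
    rw [pow_succ', mul_assoc, ih, ← mul_assoc, tauOp_mul_muRingHom, mul_assoc, ← pow_succ',
      ← pow_mul, ← pow_succ]

/-- The coefficient Frobenius `P`, acting on the coefficients `λ_{ij}` of `Σ μ_{λ_{ij}} τ^i d^j`. -/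
noncomputable def frobCoeff : (ℕ × ℕ →₀ L) →+ (ℕ × ℕ →₀ L) :=
  Finsupp.mapRange.addMonoidHom (iterateFrobenius L p υ).toAddMonoidHom

theorem frobCoeff_apply (f : ℕ × ℕ →₀ L) (ij : ℕ × ℕ) : frobCoeff p υ f ij = f ij ^ p ^ υ := by
  simp [frobCoeff, iterateFrobenius_def]

theorem frobCoeff_single (i j : ℕ) (c : L) :
    frobCoeff p υ (Finsupp.single (i, j) c) = Finsupp.single (i, j) (c ^ p ^ υ) := by
  simp [frobCoeff, iterateFrobenius_def]

end Operators

section FrobeniusRoot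

variable {p υ : ℕ} [Fact p.Prime] {L : Type*} [Field L] [CharP L p] {rt : L → L}

theorem support_frobCoeff (f : ℕ × ℕ →₀ L) : (frobCoeff p υ f).support = f.support :=
  Finsupp.support_mapRange_of_injective (map_zero _) _ (iterateFrobenius L p υ).injective

theorem pow_pow_char_injective (i : ℕ) : Function.Injective fun a : L => a ^ (p ^ υ) ^ i :=
  fun a b h => (iterateFrobenius L p (υ * i)).injective
    (by simpa [iterateFrobenius_def, pow_mul] using h)

theorem rt_pow (hrt : ∀ a : L, rt a ^ p ^ υ = a) (a : L) : rt (a ^ p ^ υ) = a :=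
  (iterateFrobenius L p υ).injective (by simp only [iterateFrobenius_def, hrt])

theorem rt_mul (hrt : ∀ a : L, rt a ^ p ^ υ = a) (a b : L) : rt (a * b) = rt a * rt b := by
  rw [← rt_pow hrt (rt a * rt b), mul_pow, hrt, hrt]

theorem rt_sub (hrt : ∀ a : L, rt a ^ p ^ υ = a) (a b : L) : rt (a - b) = rt a - rt b := by
  rw [← rt_pow hrt (rt a - rt b), sub_pow_char_pow, hrt, hrt]

end FrobeniusRoot

noncomputable section Carlitz

variable {p υ : ℕ} [Fact p.Prime] {L : Type*} [Field L] [CharP L p] (x : L) {rt : L → L}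
  (hrt : ∀ a : L, rt a ^ p ^ υ = a)

local notation "τ" => tauOp p υ L
local notation "𝔡" => dOp p υ L x rt hrt
local notation "μ" => muRingHom L

theorem dOp_mul_muRingHom (a : L) : 𝔡 * μ a = μ (rt a) * 𝔡 :=
  AddMonoidHom.ext fun u => funext fun t => by
    show rt (a * u (x * t) - x * (a * u t)) = rt a * rt (u (x * t) - x * u t)
    rw [← rt_mul hrt]
    ring_nf

theorem dOp_mul_tauOp : 𝔡 * τ = τ * 𝔡 + μ (x - rt x) :=
  AddMonoidHom.ext fun u => funext fun t => by
    show rt (u (x * t) ^ p ^ υ - x * u t ^ p ^ υ)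
      = rt (u (x * t) - x * u t) ^ p ^ υ + (x - rt x) * u t
    have hpow : u (x * t) ^ p ^ υ - x * u t ^ p ^ υ = (u (x * t) - rt x * u t) ^ p ^ υ := by
      rw [sub_pow_char_pow, mul_pow, hrt]
    rw [hpow, rt_pow hrt, hrt]
    ring

theorem dOp_pow_mul_muRingHom (j : ℕ) (a : L) : 𝔡 ^ j * μ a = μ (rt^[j] a) * 𝔡 ^ j := by
  induction j generalizing a with
  | zero => simp
  | succ j ih =>
    rw [pow_succ, mul_assoc, dOp_mul_muRingHom, ← mul_assoc, ih, mul_assoc, ← pow_succ,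
      Function.iterate_succ_apply]

theorem dOp_pow_succ_mul_tauOp (j : ℕ) :
    𝔡 ^ (j + 1) * τ = τ * 𝔡 ^ (j + 1) + μ (x - rt^[j + 1] x) * 𝔡 ^ j := by
  induction j with
  | zero => simpa using dOp_mul_tauOp x hrt
  | succ j ih =>
    have hcoeff : x - rt x + rt (x - rt^[j + 1] x) = x - rt^[j + 2] x := by
      rw [rt_sub hrt, ← Function.iterate_succ_apply' rt (j + 1)]
      ring
    rw [pow_succ' 𝔡 (j + 1), mul_assoc, ih, mul_add, ← mul_assoc, dOp_mul_tauOp, ← mul_assoc,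
      dOp_mul_muRingHom, add_mul, mul_assoc, ← pow_succ', mul_assoc (μ _) 𝔡, ← pow_succ',
      add_assoc, ← add_mul, ← map_add, hcoeff]

theorem dOp_mul_tauOp_pow_succ (i : ℕ) :
    𝔡 * τ ^ (i + 1) = τ ^ (i + 1) * 𝔡 + μ (x ^ (p ^ υ) ^ i - rt x) * τ ^ i := by
  induction i with
  | zero => simpa using dOp_mul_tauOp x hrt
  | succ i ih =>
    have hcoeff : (x - rt x) ^ (p ^ υ) ^ (i + 1) + (x ^ (p ^ υ) ^ i - rt x)
        = x ^ (p ^ υ) ^ (i + 1) - rt x := by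
      rw [← pow_mul, sub_pow_char_pow, pow_mul, pow_succ', pow_mul, pow_mul, hrt]
      ring
    rw [pow_succ τ (i + 1), ← mul_assoc, ih, add_mul, mul_assoc, dOp_mul_tauOp, mul_add,
      ← mul_assoc, ← pow_succ, tauOp_pow_mul_muRingHom, mul_assoc, ← pow_succ, add_assoc,
      ← add_mul, ← map_add, hcoeff]

theorem muOp_mem_opRingA (a : L) : muOp L a ∈ opRingA p υ L x rt hrt :=
  Subring.subset_closure (Or.inl ⟨a, rfl⟩)

theorem tauOp_mem_opRingA : τ ∈ opRingA p υ L x rt hrt :=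
  Subring.subset_closure (Or.inr (Set.mem_insert _ _))

theorem dOp_mem_opRingA : 𝔡 ∈ opRingA p υ L x rt hrt :=
  Subring.subset_closure (Or.inr (Set.mem_insert_of_mem _ rfl))

/-- The operator `Σ μ_{f(i,j)} τ^i d^j`. -/
def ofCoeff : (ℕ × ℕ →₀ L) →+ AddMonoid.End (L → L) :=
  Finsupp.liftAddHom fun ij =>
    (AddMonoidHom.mulRight (τ ^ ij.1 * 𝔡 ^ ij.2)).comp (μ).toAddMonoidHom

theorem ofCoeff_single (i j : ℕ) (c : L) :
    ofCoeff x hrt (Finsupp.single (i, j) c) = μ c * (τ ^ i * 𝔡 ^ j) :=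
  Finsupp.liftAddHom_apply_single _ _ _

theorem ofCoeff_eq_sum_range (f : ℕ × ℕ →₀ L) {m n : ℕ}
    (h : f.support ⊆ Finset.range (m + 1) ×ˢ Finset.range (n + 1)) :
    ofCoeff x hrt f = ∑ i ∈ Finset.range (m + 1), ∑ j ∈ Finset.range (n + 1),
      muOp L (f (i, j)) * τ ^ i * 𝔡 ^ j := by
  rw [ofCoeff, Finsupp.liftAddHom_apply, Finsupp.sum_of_support_subset f h _ (by simp),
    Finset.sum_product]
  simp [mul_assoc, muRingHom_apply]

theorem muRingHom_mul_ofCoeff (a : L) (f : ℕ × ℕ →₀ L) :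
    μ a * ofCoeff x hrt f = ofCoeff x hrt (a • f) := by
  induction f using Finsupp.induction_linear with
  | zero => simp
  | add f g hf hg => rw [map_add, mul_add, hf, hg, smul_add, map_add]
  | single ij c =>
    rw [Finsupp.smul_single, ofCoeff_single, ofCoeff_single, ← mul_assoc, ← map_mul,
      smul_eq_mul]

theorem tauOp_mul_ofCoeff_single (i j : ℕ) (c : L) :
    τ * ofCoeff x hrt (Finsupp.single (i, j) c)
      = ofCoeff x hrt (Finsupp.single (i + 1, j) (c ^ p ^ υ)) := by
  rw [ofCoeff_single, ofCoeff_single, ← mul_assoc, tauOp_mul_muRingHom, mul_assoc,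
    ← mul_assoc τ, ← pow_succ']

theorem ofCoeff_single_mul_muRingHom (i j : ℕ) (c a : L) :
    ofCoeff x hrt (Finsupp.single (i, j) c) * μ a
      = ofCoeff x hrt (Finsupp.single (i, j) ((rt^[j] a) ^ (p ^ υ) ^ i * c)) := by
  rw [ofCoeff_single, ofCoeff_single, mul_assoc, mul_assoc, dOp_pow_mul_muRingHom,
    ← mul_assoc (τ ^ i), tauOp_pow_mul_muRingHom, mul_assoc, ← mul_assoc (μ c), ← map_mul,
    mul_comm c]

theorem ofCoeff_single_mul_dOp (i j : ℕ) (c : L) :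
    ofCoeff x hrt (Finsupp.single (i, j) c) * 𝔡
      = ofCoeff x hrt (Finsupp.single (i, j + 1) c) := by
  rw [ofCoeff_single, ofCoeff_single, mul_assoc, mul_assoc, ← pow_succ]

theorem ofCoeff_single_zero_mul_tauOp (i : ℕ) (c : L) :
    ofCoeff x hrt (Finsupp.single (i, 0) c) * τ
      = ofCoeff x hrt (Finsupp.single (i + 1, 0) c) := by
  rw [ofCoeff_single, ofCoeff_single, pow_zero, mul_one, mul_one, mul_assoc, ← pow_succ]

theorem ofCoeff_single_succ_mul_tauOp (i j : ℕ) (c : L) :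
    ofCoeff x hrt (Finsupp.single (i, j + 1) c) * τ
      = ofCoeff x hrt (Finsupp.single (i + 1, j + 1) c)
        + ofCoeff x hrt (Finsupp.single (i, j) ((x - rt^[j + 1] x) ^ (p ^ υ) ^ i * c)) := by
  rw [ofCoeff_single, ofCoeff_single, ofCoeff_single, mul_assoc, mul_assoc,
    dOp_pow_succ_mul_tauOp, mul_add, ← mul_assoc (τ ^ i), ← pow_succ, ← mul_assoc (τ ^ i),
    tauOp_pow_mul_muRingHom, mul_add, mul_comm _ c, map_mul]
  simp only [mul_assoc]

theorem ofCoeff_mul_mem_range {g : AddMonoid.End (L → L)}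
    (hg : g ∈ Set.range (muOp L) ∪ {τ, 𝔡}) (f : ℕ × ℕ →₀ L) :
    ofCoeff x hrt f * g ∈ (ofCoeff x hrt).range := by
  induction f using Finsupp.induction_linear with
  | zero => simp
  | add f₁ f₂ h₁ h₂ => rw [map_add, add_mul]; exact add_mem h₁ h₂
  | single ij c =>
    obtain ⟨i, j⟩ := ij
    rcases hg with ⟨a, rfl⟩ | rfl | rfl
    · exact ⟨_, (ofCoeff_single_mul_muRingHom x hrt i j c a).symm⟩
    · cases j with
      | zero => exact ⟨_, (ofCoeff_single_zero_mul_tauOp x hrt i c).symm⟩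
      | succ j =>
        exact ⟨_, (map_add _ _ _).trans (ofCoeff_single_succ_mul_tauOp x hrt i j c).symm⟩
    · exact ⟨_, (ofCoeff_single_mul_dOp x hrt i j c).symm⟩

theorem mem_range_ofCoeff {a : AddMonoid.End (L → L)} (ha : a ∈ opRingA p υ L x rt hrt) :
    a ∈ (ofCoeff x hrt).range := by
  set S := (ofCoeff x hrt).range
  have hmul : ∀ s ∈ S, s * a ∈ S := by
    induction ha using Subring.closure_induction with
    | mem g hg => rintro _ ⟨f, rfl⟩; exact ofCoeff_mul_mem_range x hrt hg f
    | zero => intro s _; simp [S]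
    | one => intro s hs; rwa [mul_one]
    | add a b _ _ ha hb => intro s hs; rw [mul_add]; exact S.add_mem (ha s hs) (hb s hs)
    | neg a _ ha =>
      intro s hs
      convert S.neg_mem (ha s hs) using 1
      exact mul_neg s a
    | mul a b _ _ ha hb => intro s hs; rw [← mul_assoc]; exact hb _ (ha s hs)
  simpa using hmul 1 ⟨Finsupp.single (0, 0) 1, by simp [ofCoeff_single]⟩

theorem ofCoeff_mul_muRingHom (a : L) (f : ℕ × ℕ →₀ L) :
    ofCoeff x hrt f * μ a
      = ofCoeff x hrt ((fun ij : ℕ × ℕ => (rt^[ij.2] a) ^ (p ^ υ) ^ ij.1) • f) := by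
  induction f using Finsupp.induction_linear with
  | zero => simp
  | add f g hf hg => rw [map_add, add_mul, hf, hg, smul_add, map_add]
  | single ij c =>
    rw [Finsupp.pointwise_smul_single]
    exact ofCoeff_single_mul_muRingHom x hrt ij.1 ij.2 c a

theorem ofCoeff_pow_fst_smul_frobCoeff (f : ℕ × ℕ →₀ L) :
    ofCoeff x hrt ((fun ij : ℕ × ℕ => x ^ (p ^ υ) ^ ij.1) • frobCoeff p υ f)
      = (ofCoeff x hrt (frobCoeff p υ f) * τ - τ * ofCoeff x hrt f) * 𝔡
        + ofCoeff x hrt (frobCoeff p υ f) * μ x := by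
  induction f using Finsupp.induction_linear with
  | zero => simp
  | add f g hf hg =>
    simp only [map_add, smul_add, add_mul, mul_add, sub_mul, hf, hg]
    abel
  | single ij c =>
    obtain ⟨i, j⟩ := ij
    rw [frobCoeff_single, Finsupp.pointwise_smul_single, tauOp_mul_ofCoeff_single,
      ofCoeff_single_mul_muRingHom]
    cases j with
    | zero => simp [ofCoeff_single_zero_mul_tauOp]
    | succ j =>
      -- The commutator part keeps only the lower-order term `μ_{x - rt^[j+1] x} d^j` of
      -- `d^{j+1} τ`; its weight adds up with the weight `(rt^[j+1] x)^{q^i}` of `· μ_x` to `x^{q^i}`.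
      have hcoeff : x ^ (p ^ υ) ^ i
          = (x - rt^[j + 1] x) ^ (p ^ υ) ^ i + (rt^[j + 1] x) ^ (p ^ υ) ^ i := by
        rw [← pow_mul, ← add_pow_char_pow, sub_add_cancel]
      rw [ofCoeff_single_succ_mul_tauOp, add_sub_cancel_left, ofCoeff_single_mul_dOp, ← map_add,
        ← Finsupp.single_add, ← add_mul, ← hcoeff]

variable {x hrt} {D : Set (AddMonoid.End (L → L))}

theorem ofCoeff_frobCoeff_mem (hDP : ∀ (m n : ℕ) (lam : ℕ → ℕ → L),
      (∑ i ∈ Finset.range (m + 1), ∑ j ∈ Finset.range (n + 1),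
          muOp L (lam i j) * τ ^ i * 𝔡 ^ j) ∈ D →
      (∑ i ∈ Finset.range (m + 1), ∑ j ∈ Finset.range (n + 1),
          muOp L ((lam i j) ^ p ^ υ) * τ ^ i * 𝔡 ^ j) ∈ D)
    {f : ℕ × ℕ →₀ L} (hf : ofCoeff x hrt f ∈ D) : ofCoeff x hrt (frobCoeff p υ f) ∈ D := by
  obtain ⟨m, n, h⟩ := f.support.subset_range_prod_range
  rw [ofCoeff_eq_sum_range x hrt f h] at hf
  rw [ofCoeff_eq_sum_range x hrt _ ((support_frobCoeff f).trans_subset h)]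
  simpa only [frobCoeff_apply] using hDP m n (fun i j => f (i, j)) hf

theorem ofCoeff_sub_smul_mem (hD : IsTwoSidedIdealIn (opRingA p υ L x rt hrt) D)
    {F : ℕ × ℕ →₀ L} {v : ℕ × ℕ → L} (hF : ofCoeff x hrt F ∈ D)
    (hv : ofCoeff x hrt (v • F) ∈ D) (c : L) :
    ofCoeff x hrt ((fun ij => c - v ij) • F) ∈ D := by
  have hsplit : ofCoeff x hrt ((fun ij => c - v ij) • F)
      = μ c * ofCoeff x hrt F - ofCoeff x hrt (v • F) := by
    rw [muRingHom_mul_ofCoeff, ← map_sub]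
    congr 1
    ext ij
    simp [Finsupp.coe_pointwise_smul, sub_mul]
  rw [hsplit]
  exact hD.sub_mem (hD.mul_mem_left _ (muOp_mem_opRingA x hrt c) _ hF) hv

theorem ofCoeff_pow_fst_smul_frobCoeff_mem (hD : IsTwoSidedIdealIn (opRingA p υ L x rt hrt) D)
    (hP : ∀ f, ofCoeff x hrt f ∈ D → ofCoeff x hrt (frobCoeff p υ f) ∈ D)
    {f : ℕ × ℕ →₀ L} (hf : ofCoeff x hrt f ∈ D) :
    ofCoeff x hrt ((fun ij : ℕ × ℕ => x ^ (p ^ υ) ^ ij.1) • frobCoeff p υ f) ∈ D := by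
  have hPf := hP f hf
  rw [ofCoeff_pow_fst_smul_frobCoeff]
  refine hD.add_mem _ (hD.mul_mem_right _ (dOp_mem_opRingA x hrt) _ (hD.sub_mem ?_ ?_)) _
    (hD.mul_mem_right _ (muOp_mem_opRingA x hrt x) _ hPf)
  · exact hD.mul_mem_right _ (tauOp_mem_opRingA x hrt) _ hPf
  · exact hD.mul_mem_left _ (tauOp_mem_opRingA x hrt) _ hf

theorem exists_mem_support_ssubset (hD : IsTwoSidedIdealIn (opRingA p υ L x rt hrt) D)
    (hP : ∀ f, ofCoeff x hrt f ∈ D → ofCoeff x hrt (frobCoeff p υ f) ∈ D)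
    (hq : 2 ≤ p ^ υ) (hx : Function.Injective (x ^ · : ℕ → L))
    {f : ℕ × ℕ →₀ L} (hf : ofCoeff x hrt f ∈ D) {a b : ℕ × ℕ} (ha : a ∈ f.support)
    (hb : b ∈ f.support) (hab : a ≠ b) :
    ∃ g, ofCoeff x hrt g ∈ D ∧ a ∈ g.support ∧ g.support ⊂ f.support := by
  by_cases hrow : a.1 = b.1
  · set v : ℕ × ℕ → L := fun ij => (rt^[ij.2] x) ^ (p ^ υ) ^ ij.1
    have hva : v b - v a ≠ 0 := by
      refine sub_ne_zero.2 fun h => hab (Prod.ext hrow.symm ?_).symm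
      simp only [v, hrow] at h
      exact iterate_apply_injective hx hq hrt (pow_pow_char_injective _ h)
    have hv : ofCoeff x hrt (v • f) ∈ D := by
      rw [← ofCoeff_mul_muRingHom]
      exact hD.mul_mem_right _ (muOp_mem_opRingA x hrt x) _ hf
    exact ⟨_, ofCoeff_sub_smul_mem hD hf hv (v b),
      Finsupp.support_pointwise_smul_ssubset ha hva hb (sub_self _)⟩
  · set v : ℕ × ℕ → L := fun ij => x ^ (p ^ υ) ^ ij.1
    have hva : v b - v a ≠ 0 := sub_ne_zero.2 fun h => hrow (pow_pow_injective hx hq h).symm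
    rw [← support_frobCoeff (p := p) (υ := υ) f] at ha hb ⊢
    exact ⟨_, ofCoeff_sub_smul_mem hD (hP f hf) (ofCoeff_pow_fst_smul_frobCoeff_mem hD hP hf)
      (v b), Finsupp.support_pointwise_smul_ssubset ha hva hb (sub_self _)⟩

theorem exists_ofCoeff_single_mem (hD : IsTwoSidedIdealIn (opRingA p υ L x rt hrt) D)
    (hP : ∀ f, ofCoeff x hrt f ∈ D → ofCoeff x hrt (frobCoeff p υ f) ∈ D)
    (hq : 2 ≤ p ^ υ) (hx : Function.Injective (x ^ · : ℕ → L))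
    {f : ℕ × ℕ →₀ L} (hf : ofCoeff x hrt f ∈ D) (hf0 : f ≠ 0) :
    ∃ ij c, c ≠ 0 ∧ ofCoeff x hrt (Finsupp.single ij c) ∈ D := by
  induction hn : f.support.card using Nat.strong_induction_on generalizing f with
  | _ n ih =>
    obtain hn1 | hn1 := le_or_gt n 1
    · have hcard : f.support.card = 1 :=
        le_antisymm (hn ▸ hn1) (Finset.card_pos.2 (Finsupp.support_nonempty_iff.2 hf0))
      obtain ⟨a, ha, hfa⟩ := Finsupp.card_support_eq_one.1 hcard
      exact ⟨a, f a, ha, hfa ▸ hf⟩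
    · obtain ⟨a, ha, b, hb, hab⟩ := Finset.one_lt_card.1 (hn ▸ hn1)
      obtain ⟨g, hg, hag, hgf⟩ := exists_mem_support_ssubset hD hP hq hx hf ha hb hab
      exact ih _ (hn ▸ Finset.card_lt_card hgf) hg (Finsupp.support_nonempty_iff.1 ⟨a, hag⟩)
        rfl

theorem ofCoeff_single_one_mem (hD : IsTwoSidedIdealIn (opRingA p υ L x rt hrt) D)
    {ij : ℕ × ℕ} {c : L} (hc : c ≠ 0) (h : ofCoeff x hrt (Finsupp.single ij c) ∈ D) :
    ofCoeff x hrt (Finsupp.single ij 1) ∈ D := by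
  have h' := hD.mul_mem_left _ (muOp_mem_opRingA x hrt c⁻¹) _ h
  rwa [← muRingHom_apply, muRingHom_mul_ofCoeff, Finsupp.smul_single, smul_eq_mul,
    inv_mul_cancel₀ hc] at h'

theorem ofCoeff_single_one_mem_of_succ_snd (hD : IsTwoSidedIdealIn (opRingA p υ L x rt hrt) D)
    (hq : 2 ≤ p ^ υ) (hx : Function.Injective (x ^ · : ℕ → L)) {i j : ℕ}
    (h : ofCoeff x hrt (Finsupp.single (i, j + 1) 1) ∈ D) :
    ofCoeff x hrt (Finsupp.single (i, j) 1) ∈ D := by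
  have hcomm := hD.sub_mem (hD.mul_mem_right _ (tauOp_mem_opRingA x hrt) _ h)
    (hD.mul_mem_left _ (tauOp_mem_opRingA x hrt) _ h)
  rw [ofCoeff_single_succ_mul_tauOp, tauOp_mul_ofCoeff_single, one_pow,
    add_sub_cancel_left] at hcomm
  refine ofCoeff_single_one_mem hD (mul_ne_zero (pow_ne_zero _ (sub_ne_zero.2 ?_)) one_ne_zero)
    hcomm
  exact (iterate_apply_injective hx hq hrt).ne (Nat.succ_ne_zero j).symm

theorem ofCoeff_single_one_mem_of_succ_fst (hD : IsTwoSidedIdealIn (opRingA p υ L x rt hrt) D)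
    (hq : 2 ≤ p ^ υ) (hx : Function.Injective (x ^ · : ℕ → L)) {i : ℕ}
    (h : ofCoeff x hrt (Finsupp.single (i + 1, 0) 1) ∈ D) :
    ofCoeff x hrt (Finsupp.single (i, 0) 1) ∈ D := by
  have hcomm := hD.sub_mem (hD.mul_mem_left _ (dOp_mem_opRingA x hrt) _ h)
    (hD.mul_mem_right _ (dOp_mem_opRingA x hrt) _ h)
  have hid : 𝔡 * ofCoeff x hrt (Finsupp.single (i + 1, 0) 1)
        - ofCoeff x hrt (Finsupp.single (i + 1, 0) 1) * 𝔡
      = ofCoeff x hrt (Finsupp.single (i, 0) (x ^ (p ^ υ) ^ i - rt x)) := by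
    simp only [ofCoeff_single, map_one, one_mul, pow_zero, mul_one, dOp_mul_tauOp_pow_succ,
      add_sub_cancel_left]
  rw [hid] at hcomm
  refine ofCoeff_single_one_mem hD (sub_ne_zero.2 fun h => ?_) hcomm
  have hpow : x ^ (p ^ υ) ^ (i + 1) = x ^ (p ^ υ) ^ 0 := by
    rw [pow_succ, pow_mul, h, hrt, pow_zero, pow_one]
  exact Nat.succ_ne_zero i (pow_pow_injective hx hq hpow)

theorem one_mem_of_ofCoeff_single_mem (hD : IsTwoSidedIdealIn (opRingA p υ L x rt hrt) D)
    (hq : 2 ≤ p ^ υ) (hx : Function.Injective (x ^ · : ℕ → L)) {i j : ℕ} {c : L} (hc : c ≠ 0)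
    (h : ofCoeff x hrt (Finsupp.single (i, j) c) ∈ D) :
    (1 : AddMonoid.End (L → L)) ∈ D := by
  replace h := ofCoeff_single_one_mem hD hc h
  clear hc
  induction j with
  | zero =>
    induction i with
    | zero => simpa [ofCoeff_single] using h
    | succ i ih => exact ih (ofCoeff_single_one_mem_of_succ_fst hD hq hx h)
  | succ j ih => exact ih (ofCoeff_single_one_mem_of_succ_snd hD hq hx h)

end Carlitz

theorem no_nontrivial_P_stable_ideal_general (p υ : ℕ) [Fact p.Prime] (hυ : 1 ≤ υ)
    (L : Type*) [Field L] [CharP L p] [Algebra (ZMod p) L]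
    (x : L) (hx : Transcendental (ZMod p) x)
    (rt : L → L) (hrt : ∀ a : L, rt a ^ p ^ υ = a)
    (D : Set (AddMonoid.End (L → L)))
    (hDsub : D ⊆ (opRingA p υ L x rt hrt : Set (AddMonoid.End (L → L))))
    (hDadd : ∀ a ∈ D, ∀ b ∈ D, a + b ∈ D)
    (hDneg : ∀ a ∈ D, -a ∈ D)
    (hDleft : ∀ a ∈ opRingA p υ L x rt hrt, ∀ s ∈ D, a * s ∈ D)
    (hDright : ∀ a ∈ opRingA p υ L x rt hrt, ∀ s ∈ D, s * a ∈ D)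
    (hDP : ∀ (m n : ℕ) (lam : ℕ → ℕ → L),
      (∑ i ∈ Finset.range (m + 1), ∑ j ∈ Finset.range (n + 1),
          muOp L (lam i j) * (tauOp p υ L) ^ i * (dOp p υ L x rt hrt) ^ j) ∈ D →
      (∑ i ∈ Finset.range (m + 1), ∑ j ∈ Finset.range (n + 1),
          muOp L ((lam i j) ^ p ^ υ) * (tauOp p υ L) ^ i * (dOp p υ L x rt hrt) ^ j) ∈ D)
    (hDne : ∃ s ∈ D, s ≠ 0) :
    D = (opRingA p υ L x rt hrt : Set (AddMonoid.End (L → L))) := by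
  have hD : IsTwoSidedIdealIn (opRingA p υ L x rt hrt) D := ⟨hDadd, hDneg, hDleft, hDright⟩
  have hq : 2 ≤ p ^ υ := (Fact.out : p.Prime).two_le.trans (Nat.le_self_pow (by omega) p)
  have hxinj := pow_injective_of_transcendental hx
  obtain ⟨s, hs, hs0⟩ := hDne
  obtain ⟨f, rfl⟩ := mem_range_ofCoeff x hrt (hDsub hs)
  obtain ⟨⟨i, j⟩, c, hc, hcD⟩ := exists_ofCoeff_single_mem hD (fun _ => ofCoeff_frobCoeff_mem hDP)
    hq hxinj hs (by rintro rfl; exact hs0 (map_zero _))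
  have h1 := one_mem_of_ofCoeff_single_mem hD hq hxinj hc hcD
  exact hDsub.antisymm fun a ha => by simpa using hD.mul_mem_left a ha 1 h1

/-- `𝒜` possesses no non-trivial two-sided ideals stable with respect
to the coefficient Frobenius map `P : Σ μ_λij ∘ τ^i ∘ d^j ↦ Σ μ_(λij^q) ∘ τ^i ∘ d^j`. -/
theorem no_nontrivial_P_stable_ideal (p υ : ℕ) [Fact p.Prime] (hυ : 1 ≤ υ)
    (L : Type*) [Field L] [IsAlgClosed L] [CharP L p] [Algebra (ZMod p) L]
    (x : L) (hx : Transcendental (ZMod p) x)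
    (rt : L → L) (hrt : ∀ a : L, rt a ^ p ^ υ = a)
    (D : Set (AddMonoid.End (L → L)))
    (hDsub : D ⊆ (opRingA p υ L x rt hrt : Set (AddMonoid.End (L → L))))
    (hD0 : (0 : AddMonoid.End (L → L)) ∈ D)
    (hDadd : ∀ a ∈ D, ∀ b ∈ D, a + b ∈ D)
    (hDneg : ∀ a ∈ D, -a ∈ D)
    (hDleft : ∀ a ∈ opRingA p υ L x rt hrt, ∀ s ∈ D, a * s ∈ D)
    (hDright : ∀ a ∈ opRingA p υ L x rt hrt, ∀ s ∈ D, s * a ∈ D)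
    (hDP : ∀ (m n : ℕ) (lam : ℕ → ℕ → L),
      (∑ i ∈ Finset.range (m + 1), ∑ j ∈ Finset.range (n + 1),
          muOp L (lam i j) * (tauOp p υ L) ^ i * (dOp p υ L x rt hrt) ^ j) ∈ D →
      (∑ i ∈ Finset.range (m + 1), ∑ j ∈ Finset.range (n + 1),
          muOp L ((lam i j) ^ p ^ υ) * (tauOp p υ L) ^ i * (dOp p υ L x rt hrt) ^ j) ∈ D)
    (hDne : ∃ s ∈ D, s ≠ 0) :
    D = (opRingA p υ L x rt hrt : Set (AddMonoid.End (L → L))) :=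
  no_nontrivial_P_stable_ideal_general p υ hυ L x hx rt hrt D hDsub hDadd hDneg hDleft hDright hDP
    hDne
end

section
/- The ring 𝒜 has no zero-divisors: if a, b ∈ 𝒜 and a∘b = 0, then a = 0 or b = 0. -/
/-!
Write `φ` for the automorphism `a ↦ a^q` of `L`. Every element of `𝒜` is a finite sum
`u ↦ (t ↦ ∑ c_{j,s} φ^j (u (x^s t)))` with `j ∈ ℤ`, `s ∈ ℕ`; for `d` this uses `rt = φ⁻¹`.
Such operators compose by a twisted convolution of their coefficients, in which the coefficient
at a uniquely attained sum of exponents is a product, so the convolution of nonzero coefficient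
families is nonzero (`ℤ × ℕ` has unique sums). The coefficients are determined by the operator:
evaluating at `u y = λ y^n` and `t = 1` gives a combination of the monoid characters
`(λ, n) ↦ φ^j (λ x^{sn})` of `L × ℕ`, which are pairwise distinct because the transcendence of `x`
makes both `φ` and `x` of infinite order, and Dedekind's lemma applies.
-/

open Finsupp

namespace SkewOp

variable {L : Type*} [CommRing L] (σ : RingAut L) (x : L)

def monomial (js : ℤ × ℕ) : L →+ AddMonoid.End (L → L) where
  toFun a :=
    { toFun := fun u t ↦ a * (σ ^ js.1) (u (x ^ js.2 * t))
      map_zero' := by funext t; simp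
      map_add' := fun u v ↦ by funext t; simp [mul_add] }
  map_zero' := by ext u t; exact zero_mul _
  map_add' a b := by ext u t; exact add_mul _ _ _

@[simp]
theorem monomial_apply (js : ℤ × ℕ) (a : L) (u : L → L) (t : L) :
    monomial σ x js a u t = a * (σ ^ js.1) (u (x ^ js.2 * t)) := rfl

theorem monomial_mul_monomial (js ks : ℤ × ℕ) (a b : L) :
    monomial σ x js a * monomial σ x ks b = monomial σ x (js + ks) (a * (σ ^ js.1) b) := by
  ext u t
  simp only [AddMonoid.End.coe_mul, Function.comp_apply, monomial_apply, Prod.fst_add, Prod.snd_add,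
    zpow_add, RingAut.mul_apply, map_mul, pow_add, mul_assoc, mul_left_comm (x ^ ks.2)]

noncomputable def toEnd : ((ℤ × ℕ) →₀ L) →+ AddMonoid.End (L → L) := liftAddHom (monomial σ x)

theorem toEnd_apply (c : (ℤ × ℕ) →₀ L) (u : L → L) (t : L) :
    toEnd σ x c u t = c.sum fun js a ↦ a * (σ ^ js.1) (u (x ^ js.2 * t)) := by
  rw [toEnd, liftAddHom_apply, Finsupp.sum, Finsupp.sum]
  exact (congrFun (AddMonoidHom.finsetSum_apply _ _ _) t).trans (Finset.sum_apply _ _ _)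

theorem toEnd_single (js : ℤ × ℕ) (a : L) : toEnd σ x (single js a) = monomial σ x js a :=
  liftAddHom_apply_single _ _ _

noncomputable def skewMul (c d : (ℤ × ℕ) →₀ L) : (ℤ × ℕ) →₀ L :=
  c.sum fun js a ↦ d.sum fun ks b ↦ single (js + ks) (a * (σ ^ js.1) b)

theorem toEnd_mul (c d : (ℤ × ℕ) →₀ L) :
    toEnd σ x c * toEnd σ x d = toEnd σ x (skewMul σ c d) := by
  simp only [toEnd, liftAddHom_apply, skewMul, map_finsuppSum, Finsupp.sum_mul]
  simp only [Finsupp.mul_sum, monomial_mul_monomial, sum_single_index, map_zero]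

theorem skewMul_apply_add_of_uniqueAdd {c d : (ℤ × ℕ) →₀ L} {js ks : ℤ × ℕ}
    (h : UniqueAdd c.support d.support js ks) :
    skewMul σ c d (js + ks) = c js * (σ ^ js.1) (d ks) := by
  classical
  simp_rw [skewMul, Finsupp.sum_apply, single_apply, Finsupp.sum, ← Finset.sum_product']
  refine (Finset.sum_eq_single (js, ks) ?_ ?_).trans (if_pos rfl) <;> simp_rw [Finset.mem_product]
  · refine fun ab hab hne ↦ if_neg (fun he ↦ hne <| Prod.ext ?_ ?_)
    exacts [(h hab.1 hab.2 he).1, (h hab.1 hab.2 he).2]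
  · refine fun hnotMem ↦ ite_eq_right_iff.mpr (fun _ ↦ ?_)
    rcases not_and_or.mp hnotMem with hc | hd
    · rw [notMem_support_iff.mp hc, zero_mul]
    · rw [notMem_support_iff.mp hd, map_zero, mul_zero]

theorem skewMul_ne_zero [NoZeroDivisors L] {c d : (ℤ × ℕ) →₀ L} (hc : c ≠ 0) (hd : d ≠ 0) :
    skewMul σ c d ≠ 0 := by
  obtain ⟨js, hjs, ks, hks, h⟩ := UniqueSums.uniqueAdd_of_nonempty
    (support_nonempty_iff.mpr hc) (support_nonempty_iff.mpr hd)
  rw [mem_support_iff] at hjs hks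
  refine ne_iff.mpr ⟨js + ks, ?_⟩
  rw [skewMul_apply_add_of_uniqueAdd σ h]
  exact mul_ne_zero hjs ((map_ne_zero_iff _ (σ ^ js.1).injective).mpr hks)

def subring : Subring (AddMonoid.End (L → L)) where
  carrier := Set.range (toEnd σ x)
  mul_mem' := by
    rintro _ _ ⟨c, rfl⟩ ⟨d, rfl⟩
    exact ⟨skewMul σ c d, (toEnd_mul σ x c d).symm⟩
  one_mem' := ⟨single 0 1, by ext u t; simp [toEnd_single]⟩
  add_mem' := by
    rintro _ _ ⟨c, rfl⟩ ⟨d, rfl⟩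
    exact ⟨c + d, map_add _ _ _⟩
  zero_mem' := ⟨0, map_zero _⟩
  neg_mem' := by
    rintro _ ⟨c, rfl⟩
    exact ⟨-c, map_neg _ _⟩

/-- `toEnd σ x c`, evaluated at `u y = a * y ^ n` and `t = 1`, is
`∑ c js * character σ x js (a, n)`. -/
def character (js : ℤ × ℕ) : L × Multiplicative ℕ →* L :=
  (σ ^ js.1).toMonoidHom.comp ((MonoidHom.id L).coprod (powersHom L (x ^ js.2)))

@[simp]
theorem character_apply (js : ℤ × ℕ) (a : L) (n : Multiplicative ℕ) :
    character σ x js (a, n) = (σ ^ js.1) (a * (x ^ js.2) ^ n.toAdd) := rfl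

theorem character_injective (hσ : ¬IsOfFinOrder σ) (hx : Function.Injective (x ^ · : ℕ → L)) :
    Function.Injective (character σ x) := by
  rintro ⟨j, s⟩ ⟨k, r⟩ h
  have hjk : j = k := injective_zpow_iff_not_isOfFinOrder.mpr hσ <|
    RingEquiv.ext fun a ↦ by simpa using DFunLike.congr_fun h (a, 1)
  subst hjk
  have hsr := DFunLike.congr_fun h (1, Multiplicative.ofAdd 1)
  simp only [character_apply, one_mul, toAdd_ofAdd, pow_one] at hsr
  exact Prod.ext rfl (hx ((σ ^ j).injective hsr))

theorem toEnd_injective [IsDomain L] (hσ : ¬IsOfFinOrder σ)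
    (hx : Function.Injective (x ^ · : ℕ → L)) : Function.Injective (toEnd σ x) := by
  refine (injective_iff_map_eq_zero _).mpr fun c hc ↦ ?_
  have hli := (linearIndependent_monoidHom _ L).comp _ (character_injective σ x hσ hx)
  refine linearIndependent_iff.mp hli c (funext fun ⟨a, n⟩ ↦ ?_)
  have h := congrFun (DFunLike.congr_fun hc fun y ↦ a * y ^ n.toAdd) 1
  rw [toEnd_apply] at h
  rw [linearCombination_apply, Finsupp.sum, Finset.sum_apply]
  simpa [Finsupp.sum] using h

theorem noZeroDivisors_subring [IsDomain L] (hσ : ¬IsOfFinOrder σ)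
    (hx : Function.Injective (x ^ · : ℕ → L)) : NoZeroDivisors (subring σ x) where
  eq_zero_or_eq_zero_of_mul_eq_zero := by
    rintro ⟨_, c, rfl⟩ ⟨_, d, rfl⟩ hcd
    have hcd' : skewMul σ c d = 0 :=
      toEnd_injective σ x hσ hx <| by rw [← toEnd_mul, map_zero]; exact congrArg Subtype.val hcd
    rcases eq_or_ne c 0 with rfl | hc
    · exact Or.inl (Subtype.ext (map_zero _))
    rcases eq_or_ne d 0 with rfl | hd
    · exact Or.inr (Subtype.ext (map_zero _))
    exact absurd hcd' (skewMul_ne_zero σ hc hd)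

theorem muOp_eq_toEnd (a : L) : muOp L a = toEnd σ x (single 0 a) := by
  ext u t
  change a * u t = _
  simp [toEnd_single]

end SkewOp

theorem Transcendental.pow_injective {R A : Type*} [CommRing R] [Nontrivial R] [Ring A]
    [Algebra R A] {x : A} (hx : Transcendental R x) : Function.Injective (x ^ · : ℕ → A) := by
  intro m n h
  have := transcendental_iff_injective.mp hx (a₁ := Polynomial.X ^ m) (a₂ := Polynomial.X ^ n)
    (by simpa using h)
  simpa using congrArg Polynomial.natDegree this

section Carlitz

open SkewOp

variable (p υ : ℕ) [Fact p.Prime] (L : Type*) [Field L] [CharP L p] (rt : L → L)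
  (hrt : ∀ a : L, rt a ^ p ^ υ = a)

noncomputable def qPowAut : RingAut L :=
  RingEquiv.ofBijective (iterateFrobenius L p υ)
    ⟨(iterateFrobenius L p υ).injective, fun a ↦ ⟨rt a, by rw [iterateFrobenius_def, hrt]⟩⟩

variable {p υ L rt}

theorem qPowAut_apply (a : L) : qPowAut p υ L rt hrt a = a ^ p ^ υ :=
  iterateFrobenius_def p υ a

theorem qPowAut_inv_apply (a : L) : (qPowAut p υ L rt hrt)⁻¹ a = rt a :=
  (RingEquiv.symm_apply_eq _).mpr (by rw [qPowAut_apply, hrt])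

theorem qPowAut_pow_apply (n : ℕ) (a : L) : (qPowAut p υ L rt hrt ^ n) a = a ^ (p ^ υ) ^ n := by
  induction n with
  | zero => simp
  | succ n ih => rw [pow_succ', RingAut.mul_apply, ih, qPowAut_apply, ← pow_mul, ← pow_succ]

theorem not_isOfFinOrder_qPowAut (hυ : 1 ≤ υ) {x : L} (hx : Function.Injective (x ^ · : ℕ → L)) :
    ¬IsOfFinOrder (qPowAut p υ L rt hrt) := by
  rw [isOfFinOrder_iff_pow_eq_one]
  rintro ⟨n, hn, hpow⟩
  have hq : (p ^ υ) ^ n = 1 := hx (by simp [← qPowAut_pow_apply hrt, hpow])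
  have := Nat.one_lt_pow hn.ne' (Nat.one_lt_pow (by omega : υ ≠ 0) (Fact.out : p.Prime).one_lt)
  omega

theorem tauOp_eq_toEnd (x : L) :
    tauOp p υ L = toEnd (qPowAut p υ L rt hrt) x (single (1, 0) 1) := by
  ext u t
  change u t ^ p ^ υ = _
  simp [toEnd_single, qPowAut_apply]

theorem dOp_eq_toEnd (x : L) : dOp p υ L x rt hrt =
    toEnd (qPowAut p υ L rt hrt) x (single (-1, 1) 1 + single (-1, 0) (-rt x)) := by
  rw [map_add, toEnd_single, toEnd_single]
  ext u t
  change rt (u (x * t) - x * u t) = monomial _ x (-1, 1) 1 u t + monomial _ x (-1, 0) (-rt x) u t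
  simp only [monomial_apply, ← qPowAut_inv_apply hrt, map_sub, map_mul, zpow_neg_one, pow_one,
    pow_zero, one_mul, neg_mul, ← sub_eq_add_neg]

theorem opRingA_le_subring (x : L) : opRingA p υ L x rt hrt ≤ subring (qPowAut p υ L rt hrt) x :=
  Subring.closure_le.mpr <| by
    rintro _ (⟨a, rfl⟩ | rfl | rfl)
    exacts [⟨_, (muOp_eq_toEnd _ x a).symm⟩, ⟨_, (tauOp_eq_toEnd hrt x).symm⟩,
      ⟨_, (dOp_eq_toEnd hrt x).symm⟩]

end Carlitz

theorem opRing_no_zero_divisors_general (p υ : ℕ) [Fact p.Prime] (hυ : 1 ≤ υ)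
    (L : Type*) [Field L] [CharP L p] [Algebra (ZMod p) L]
    (x : L) (hx : Transcendental (ZMod p) x)
    (rt : L → L) (hrt : ∀ a : L, rt a ^ p ^ υ = a)
    (a b : AddMonoid.End (L → L)) (ha : a ∈ opRingA p υ L x rt hrt) (hb : b ∈ opRingA p υ L x rt hrt)
    (hab : a * b = 0) :
    a = 0 ∨ b = 0 := by
  have hxpow := hx.pow_injective
  have := SkewOp.noZeroDivisors_subring _ x (not_isOfFinOrder_qPowAut hrt hυ hxpow) hxpow
  have hle := opRingA_le_subring hrt x
  simpa [Subtype.ext_iff] using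
    mul_eq_zero.mp (Subtype.ext hab : (⟨a, hle ha⟩ * ⟨b, hle hb⟩ : SkewOp.subring _ x) = 0)

/-- The ring `𝒜` has no zero-divisors. -/
theorem opRing_no_zero_divisors (p υ : ℕ) [Fact p.Prime] (hυ : 1 ≤ υ)
    (L : Type*) [Field L] [IsAlgClosed L] [CharP L p] [Algebra (ZMod p) L]
    (x : L) (hx : Transcendental (ZMod p) x)
    (rt : L → L) (hrt : ∀ a : L, rt a ^ p ^ υ = a)
    (a b : AddMonoid.End (L → L)) (ha : a ∈ opRingA p υ L x rt hrt) (hb : b ∈ opRingA p υ L x rt hrt)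
    (hab : a * b = 0) :
    a = 0 ∨ b = 0 :=
  opRing_no_zero_divisors_general p υ hυ L x hx rt hrt a b ha hb hab
end

section
/- For all integers i ≥ 1 and j ≥ 1 the following commutator identities hold in 𝒜: d ∘ τ^i − τ^i ∘ d = μ_{[i]^{1/q}} ∘ τ^{i−1} and d^j ∘ τ − τ ∘ d^j = μ_{c_j} ∘ d^{j−1}, where [i]^{1/q} is the q-th root of [i] and c_j = [j]^{q^{-j}} is the q^j-th root of [j] in L. -/
section myAux

variable (p υ : ℕ) [Fact p.Prime] {L : Type*} [Field L] [CharP L p]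

lemma myPowqInj {a b : L} (h : a ^ p ^ υ = b ^ p ^ υ) : a = b :=
  (iterateFrobenius L p υ).injective (by simpa [iterateFrobenius_def] using h)

lemma mySubPowq (n : ℕ) (a b : L) :
    (a - b) ^ (p ^ υ) ^ n = a ^ (p ^ υ) ^ n - b ^ (p ^ υ) ^ n := by
  rw [show (p ^ υ) ^ n = p ^ (υ * n) from (pow_mul p υ n).symm, sub_pow_char_pow]

variable (rt : L → L) (hrt : ∀ a : L, rt a ^ p ^ υ = a)
include hrt

lemma myRtPowq (a : L) : rt (a ^ p ^ υ) = a :=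
  myPowqInj p υ (by simp only [hrt])

lemma myRtAdd (a b : L) : rt (a + b) = rt a + rt b :=
  myPowqInj p υ (by simp only [hrt, add_pow_char_pow])

lemma myRtMul (a b : L) : rt (a * b) = rt a * rt b :=
  myPowqInj p υ (by simp only [hrt, mul_pow])

lemma myRtIterAdd (n : ℕ) (a b : L) : rt^[n] (a + b) = rt^[n] a + rt^[n] b := by
  induction n with
  | zero => simp
  | succ m ih =>
    rw [Function.iterate_succ_apply', Function.iterate_succ_apply',
      Function.iterate_succ_apply', ih, myRtAdd p υ rt hrt]

lemma myRtIterPowq (n : ℕ) (a : L) : rt^[n] (a ^ (p ^ υ) ^ n) = a := by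
  induction n generalizing a with
  | zero => simp
  | succ m ih =>
    rw [Function.iterate_succ_apply,
      show a ^ (p ^ υ) ^ (m + 1) = (a ^ (p ^ υ) ^ m) ^ p ^ υ by
        rw [pow_succ, pow_mul],
      myRtPowq p υ rt hrt, ih]

end myAux

section myOps

variable (p υ : ℕ) [Fact p.Prime] (L : Type*) [Field L] [CharP L p]
  (x : L) (rt : L → L) (hrt : ∀ a : L, rt a ^ p ^ υ = a)

lemma myEndExt {f g : AddMonoid.End (L → L)} (h : ∀ u t, f u t = g u t) : f = g :=
  AddMonoidHom.ext fun u => funext fun t => h u t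

lemma myEndSubApply (f g : AddMonoid.End (L → L)) (u : L → L) (t : L) :
    (f - g) u t = f u t - g u t := rfl

lemma myEndAddApply (f g : AddMonoid.End (L → L)) (u : L → L) (t : L) :
    (f + g) u t = f u t + g u t := rfl

lemma myEndMulApply (f g : AddMonoid.End (L → L)) (u : L → L) : (f * g) u = f (g u) := rfl

lemma myDApply (u : L → L) (t : L) :
    dOp p υ L x rt hrt u t = rt (u (x * t) - x * u t) := rfl

lemma myTauApply (u : L → L) (t : L) : tauOp p υ L u t = u t ^ p ^ υ := rfl

lemma myMuApply (lam : L) (u : L → L) (t : L) : muOp L lam u t = lam * u t := rfl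

lemma myTauPowApply (i : ℕ) (u : L → L) (t : L) :
    ((tauOp p υ L) ^ i) u t = u t ^ (p ^ υ) ^ i := by
  induction i with
  | zero => simp
  | succ n ih =>
    rw [pow_succ', myEndMulApply, myTauApply, ih, ← pow_mul, ← pow_succ]

lemma myMuAdd (a b : L) : muOp L (a + b) = muOp L a + muOp L b := by
  refine myEndExt L fun u t => ?_
  rw [myEndAddApply, myMuApply, myMuApply, myMuApply, add_mul]

lemma myDMu (lam : L) :
    dOp p υ L x rt hrt * muOp L lam = muOp L (rt lam) * dOp p υ L x rt hrt :=
  by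
  refine myEndExt L fun u t => ?_
  simp only [myEndMulApply, myDApply, myMuApply]
  rw [show lam * u (x * t) - x * (lam * u t) = lam * (u (x * t) - x * u t) by ring,
    myRtMul p υ rt hrt]

lemma myComm1 (k : ℕ) :
    dOp p υ L x rt hrt * (tauOp p υ L) ^ (k + 1)
        - (tauOp p υ L) ^ (k + 1) * dOp p υ L x rt hrt
      = muOp L (rt (x ^ (p ^ υ) ^ (k + 1) - x)) * (tauOp p υ L) ^ k := by
  refine myEndExt L fun u t => ?_
  simp only [myEndSubApply, myEndMulApply, myDApply, myMuApply, myTauPowApply]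
  rw [show rt (u (x*t) - x * u t) ^ (p ^ υ) ^ (k+1) = (u (x*t) - x * u t) ^ (p ^ υ) ^ k by
    rw [pow_succ', pow_mul, hrt]]
  apply myPowqInj p υ
  rw [sub_pow_char_pow, hrt, mul_pow, hrt]
  rw [show ((u (x*t) - x * u t) ^ (p ^ υ) ^ k) ^ p ^ υ
        = u (x*t) ^ (p ^ υ) ^ (k+1) - (x * u t) ^ (p ^ υ) ^ (k+1) by
      rw [← pow_mul, ← pow_succ, mySubPowq p υ (k+1)],
    show (u t ^ (p ^ υ) ^ k) ^ p ^ υ = u t ^ (p ^ υ) ^ (k+1) by rw [← pow_mul, ← pow_succ],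
    mul_pow]
  ring

include hrt in
lemma myCoeff (n : ℕ) :
    rt (x ^ p ^ υ - x) + rt (rt^[n+1] (x ^ (p ^ υ) ^ (n+1) - x))
      = rt^[n+1+1] (x ^ (p ^ υ) ^ (n+1+1) - x) := by
  rw [show x ^ (p ^ υ) ^ (n+1+1) - x
      = (x ^ p ^ υ - x) ^ (p ^ υ) ^ (n+1) + (x ^ (p ^ υ) ^ (n+1) - x) by
    rw [mySubPowq p υ (n+1) (x ^ p ^ υ) x,
      show (x ^ p ^ υ) ^ (p ^ υ) ^ (n+1) = x ^ (p ^ υ) ^ (n+1+1) by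
        rw [← pow_mul, ← pow_succ']]
    ring]
  rw [myRtIterAdd p υ rt hrt (n+1+1),
    Function.iterate_succ_apply' rt (n+1) ((x ^ p ^ υ - x) ^ (p ^ υ) ^ (n+1)),
    myRtIterPowq p υ rt hrt (n+1) (x ^ p ^ υ - x),
    Function.iterate_succ_apply' rt (n+1) (x ^ (p ^ υ) ^ (n+1) - x)]

end myOps

/-- the commutator identities `[d, τ^i] = μ_([i]^(1/q)) ∘ τ^(i-1)` and
`[d^j, τ] = μ_([j]^(q^(-j))) ∘ d^(j-1)` hold in `𝒜` for all `i, j ≥ 1`, where the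
coefficient `c_j = rt^[j] [j]` is the `q^j`-th root of `[j]`. -/
theorem opRing_commutators (p υ : ℕ) [Fact p.Prime] (hυ : 1 ≤ υ)
    (L : Type*) [Field L] [IsAlgClosed L] [CharP L p] [Algebra (ZMod p) L]
    (x : L) (hx : Transcendental (ZMod p) x)
    (rt : L → L) (hrt : ∀ a : L, rt a ^ p ^ υ = a) :
    (∀ i : ℕ, 1 ≤ i →
      dOp p υ L x rt hrt * (tauOp p υ L) ^ i - (tauOp p υ L) ^ i * (dOp p υ L x rt hrt)
        = muOp L (rt (x ^ (p ^ υ) ^ i - x)) * (tauOp p υ L) ^ (i - 1)) ∧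
    (∀ j : ℕ, 1 ≤ j →
      (dOp p υ L x rt hrt) ^ j * (tauOp p υ L) - (tauOp p υ L) * (dOp p υ L x rt hrt) ^ j
        = muOp L (rt^[j] (x ^ (p ^ υ) ^ j - x)) * (dOp p υ L x rt hrt) ^ (j - 1)) := by
  constructor
  · intro i hi
    obtain ⟨k, rfl⟩ : ∃ k, i = k + 1 := ⟨i - 1, by omega⟩
    simpa using myComm1 p υ L x rt hrt k
  · intro j hj
    obtain ⟨k, rfl⟩ : ∃ k, j = k + 1 := ⟨j - 1, by omega⟩
    clear hj
    simp only [Nat.add_sub_cancel]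
    induction k with
    | zero => simpa using myComm1 p υ L x rt hrt 0
    | succ n ih =>
      have h1 : dOp p υ L x rt hrt * tauOp p υ L
          = muOp L (rt (x ^ p ^ υ - x)) + tauOp p υ L * dOp p υ L x rt hrt := by
        have h := myComm1 p υ L x rt hrt 0
        simp only [zero_add, pow_one, pow_zero, mul_one] at h
        rw [sub_eq_iff_eq_add] at h
        exact h
      have h2 : dOp p υ L x rt hrt ^ (n+1) * tauOp p υ L
          = muOp L (rt^[n+1] (x ^ (p ^ υ) ^ (n+1) - x)) * dOp p υ L x rt hrt ^ n
              + tauOp p υ L * dOp p υ L x rt hrt ^ (n+1) :=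
        sub_eq_iff_eq_add.mp ih
      rw [show dOp p υ L x rt hrt ^ (n+1+1) * tauOp p υ L
            = dOp p υ L x rt hrt * (dOp p υ L x rt hrt ^ (n+1) * tauOp p υ L) by
          rw [← mul_assoc, ← pow_succ'],
        h2, mul_add, ← mul_assoc, ← mul_assoc, myDMu p υ L x rt hrt, h1, add_mul,
        mul_assoc (muOp L (rt (rt^[n+1] (x ^ (p ^ υ) ^ (n+1) - x)))), ← pow_succ',
        mul_assoc (tauOp p υ L), ← pow_succ',
        ← myCoeff p υ L x rt hrt n, myMuAdd, add_mul]
      abel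
end
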